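/- Let V₁, …, V_K be bounded random variables and let Ω = E₁ ∪ … ∪ E_K be a partition into events. Suppose that for all j ≠ k, E[V_k · 1_{E_j}] ≤ E[V_j · 1_{E_j}] (on event E_j, executing the actually-chosen policy j is at least as good in expectation as counterfactually executing policy k). If additionally V_k ≥ V_l almost surely for all k, then for each k: E[V_k | E_k]·P(E_k) + (1 − P(E_k))·V_l ≤ E[V_k] ≤ Σ_{j=1}^K E[V_j | E_j]·P(E_j). -/

import Mathlib

open MeasureTheory

/-! On `E j` the expert's choice `j` beats any fixed policy `k` in expectation, so splitting `E[V k]`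
along the partition and comparing cell by cell gives the upper bound.  For the lower bound keep the
cell `E k` and bound `V k` below by `V_l` off it. -/

section

variable {Ω : Type*} [MeasurableSpace Ω] {μ : Measure Ω}

theorem setIntegral_div_measureReal_mul_measureReal [IsFiniteMeasure μ] (s : Set Ω) (f : Ω → ℝ) :
    (∫ x in s, f x ∂μ) / μ.real s * μ.real s = ∫ x in s, f x ∂μ := by
  by_cases hs : μ.real s = 0
  · rw [measureReal_eq_zero_iff] at hs
    simp [Measure.restrict_eq_zero.2 hs]
  · exact div_mul_cancel₀ _ hs

theorem integral_eq_sum_setIntegral_of_iUnion_eq_univ {ι : Type*} [Fintype ι] {E : ι → Set Ω}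
    (hE : ∀ i, MeasurableSet (E i)) (hdisj : Pairwise (Function.onFun Disjoint E))
    (hcover : ⋃ i, E i = Set.univ) {f : Ω → ℝ} (hf : Integrable f μ) :
    ∫ x, f x ∂μ = ∑ i, ∫ x in E i, f x ∂μ := by
  rw [← setIntegral_univ, ← hcover, integral_iUnion_fintype hE hdisj fun i => hf.integrableOn]

theorem setIntegral_add_measureReal_compl_mul_le_integral [IsFiniteMeasure μ] {s : Set Ω}
    (hs : MeasurableSet s) {f : Ω → ℝ} (hf : Integrable f μ) {c : ℝ} (hc : ∀ᵐ x ∂μ, c ≤ f x) :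
    ∫ x in s, f x ∂μ + μ.real sᶜ * c ≤ ∫ x, f x ∂μ := by
  have hcompl : μ.real sᶜ * c ≤ ∫ x in sᶜ, f x ∂μ := by
    calc μ.real sᶜ * c = ∫ _ in sᶜ, c ∂μ := by rw [setIntegral_const, smul_eq_mul]
      _ ≤ ∫ x in sᶜ, f x ∂μ :=
        setIntegral_mono_ae (integrableOn_const (measure_ne_top _ _)) hf.integrableOn hc
  linarith [integral_add_compl hs hf]

end

theorem causal_bound_partition_general (Ω : Type*) [MeasurableSpace Ω] (P : Measure Ω)
    [IsProbabilityMeasure P] (K : ℕ) (E : Fin K → Set Ω)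
    (hEmeas : ∀ k, MeasurableSet (E k))
    (hdisj : Pairwise (Function.onFun Disjoint E))
    (hcover : (⋃ k, E k) = Set.univ)
    (V : Fin K → Ω → ℝ) (hVint : ∀ k, Integrable (V k) P)
    (Vl : ℝ) (hVl : ∀ k, ∀ᵐ x ∂P, Vl ≤ V k x)
    (hopt : ∀ j k : Fin K, j ≠ k →
      ∫ x in E j, V k x ∂P ≤ ∫ x in E j, V j x ∂P)
    (k : Fin K) :
    ((∫ x in E k, V k x ∂P) / (P (E k)).toReal) * (P (E k)).toReal
        + (1 - (P (E k)).toReal) * Vl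
      ≤ ∫ x, V k x ∂P ∧
    ∫ x, V k x ∂P
      ≤ ∑ j : Fin K, ((∫ x in E j, V j x ∂P) / (P (E j)).toReal) * (P (E j)).toReal := by
  simp only [← measureReal_def, setIntegral_div_measureReal_mul_measureReal]
  constructor
  · rw [← probReal_compl_eq_one_sub (hEmeas k)]
    exact setIntegral_add_measureReal_compl_mul_le_integral (hEmeas k) (hVint k) (hVl k)
  · rw [integral_eq_sum_setIntegral_of_iUnion_eq_univ hEmeas hdisj hcover (hVint k)]
    refine Finset.sum_le_sum fun j _ => ?_
    rcases eq_or_ne j k with rfl | hjk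
    · exact le_rfl
    · exact hopt j k hjk

/-- causal bound (4) of Theorem 1. Partition `E 1, …, E K` of `Ω`,
counterfactual returns `V k` with `V k ≥ V_l` a.s., and expert optimality
`E[V k · 1_{E j}] ≤ E[V j · 1_{E j}]` for `j ≠ k`.  Then for each `k`,
`E[V k | E k] P(E k) + (1 − P(E k)) V_l ≤ E[V k] ≤ Σ_j E[V j | E j] P(E j)`. -/
theorem causal_bound_partition (Ω : Type*) [MeasurableSpace Ω] (P : Measure Ω)
    [IsProbabilityMeasure P] (K : ℕ) (E : Fin K → Set Ω)
    (hEmeas : ∀ k, MeasurableSet (E k))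
    (hdisj : Pairwise (Function.onFun Disjoint E))
    (hcover : (⋃ k, E k) = Set.univ)
    (hpos : ∀ k, 0 < P (E k))
    (V : Fin K → Ω → ℝ) (hVint : ∀ k, Integrable (V k) P)
    (Vl : ℝ) (hVl : ∀ k, ∀ᵐ x ∂P, Vl ≤ V k x)
    (hopt : ∀ j k : Fin K, j ≠ k →
      ∫ x in E j, V k x ∂P ≤ ∫ x in E j, V j x ∂P)
    (k : Fin K) :
    ((∫ x in E k, V k x ∂P) / (P (E k)).toReal) * (P (E k)).toReal
        + (1 - (P (E k)).toReal) * Vl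
      ≤ ∫ x, V k x ∂P ∧
    ∫ x, V k x ∂P
      ≤ ∑ j : Fin K, ((∫ x in E j, V j x ∂P) / (P (E j)).toReal) * (P (E j)).toReal :=
  causal_bound_partition_general Ω P K E hEmeas hdisj hcover V hVint Vl hVl hopt k
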